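/- arXiv:2604.16750 — 4 statements merged into one kernel-verified Lean document; each statement's English description precedes it below -/
import Mathlib

section
/- Let d ≥ 1, a ∈ ℂ with a ≠ 0, and let c± = a·(2d+1+|a|² ± √Δ_a)/(2(d+1)|a|²) with Δ_a = (|a|²−(2d+1)²)(|a|²−1) be the roots of h(z) = ā(d+1)z² − (2d+1+|a|²)z + a(d+1). If 1 ≤ |a| ≤ 2d+1 then |c₊| = |c₋| = 1; moreover c₊ = c₋ if and only if |a| = 1 or |a| = 2d+1. -/
/-!
The roots of `conj a · k z² − T z + a k` are `a (T ± s) / (2 k |a|²)`, where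
`s² = T² − 4 k² |a|²`. For `k = d + 1`, `T = 2d + 1 + |a|²` this discriminant equals
`Δ_a = (|a|² − (2d+1)²)(|a|² − 1)`, which is `≤ 0` on `1 ≤ |a| ≤ 2d + 1`; then `s = i √(−Δ_a)` is
purely imaginary, so `|T ± s|² = T² − Δ_a = 4 k² |a|²` and both roots have modulus one. They
coincide exactly when `s = 0`, i.e. when `Δ_a = 0`.
-/

open Complex

noncomputable def conjQuadraticRoot (a k T s : ℂ) : ℂ :=
  a * (T + s) / (2 * k * ((‖a‖ ^ 2 : ℝ) : ℂ))

section ConjQuadraticRoot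

variable {a k T s : ℂ}

theorem conjQuadraticRoot_isRoot (ha : a ≠ 0) (hk : k ≠ 0)
    (hs : s ^ 2 = T ^ 2 - 4 * k ^ 2 * ((‖a‖ ^ 2 : ℝ) : ℂ)) :
    starRingEnd ℂ a * k * conjQuadraticRoot a k T s ^ 2
      - T * conjQuadraticRoot a k T s + a * k = 0 := by
  have hconj : starRingEnd ℂ a * a = ((‖a‖ ^ 2 : ℝ) : ℂ) := by
    rw [conj_mul']
    push_cast
    rfl
  have hr : ((‖a‖ ^ 2 : ℝ) : ℂ) ≠ 0 :=
    ofReal_ne_zero.mpr (pow_ne_zero 2 (norm_ne_zero_iff.mpr ha))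
  rw [conjQuadraticRoot]
  field_simp
  linear_combination a * (T + s) ^ 2 * hconj + a * ((‖a‖ ^ 2 : ℝ) : ℂ) * hs

theorem norm_conjQuadraticRoot (ha : a ≠ 0) (hk : k ≠ 0) (h : ‖T + s‖ = 2 * ‖k‖ * ‖a‖) :
    ‖conjQuadraticRoot a k T s‖ = 1 := by
  have : ‖a‖ ≠ 0 := norm_ne_zero_iff.mpr ha
  have : ‖k‖ ≠ 0 := norm_ne_zero_iff.mpr hk
  rw [conjQuadraticRoot, norm_div, norm_mul, norm_mul, norm_mul, h, norm_real,
    Real.norm_of_nonneg (by positivity)]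
  field_simp
  norm_num

theorem conjQuadraticRoot_eq_neg_iff (ha : a ≠ 0) (hk : k ≠ 0) :
    conjQuadraticRoot a k T s = conjQuadraticRoot a k T (-s) ↔ s = 0 := by
  rw [conjQuadraticRoot, conjQuadraticRoot, div_left_inj' (by simp [hk, ha]), mul_right_inj' ha,
    add_right_inj, self_eq_neg]

end ConjQuadraticRoot

theorem norm_ofReal_add_I_mul_eq {x y c : ℝ} (hc : 0 ≤ c) (h : x ^ 2 + y ^ 2 = c ^ 2) :
    ‖(x : ℂ) + I * y‖ = c := by
  rw [mul_comm, norm_add_mul_I, h, Real.sqrt_sq hc]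

theorem sq_sub_sq_mul_sq_sub_one_eq_zero_iff {r c : ℝ} (hr : 0 ≤ r) (hc : 0 ≤ c) :
    (r ^ 2 - c ^ 2) * (r ^ 2 - 1) = 0 ↔ r = 1 ∨ r = c := by
  rw [mul_eq_zero, sub_eq_zero, sub_eq_zero, sq_eq_sq₀ hr hc,
    pow_eq_one_iff_of_nonneg hr two_ne_zero, or_comm]

theorem stmt6_general (d : ℕ) (a : ℂ)
    (h1 : 1 ≤ ‖a‖) (h2 : ‖a‖ ≤ 2 * d + 1) :
    let Δ : ℝ := (‖a‖ ^ 2 - (2 * (d : ℝ) + 1) ^ 2) * (‖a‖ ^ 2 - 1)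
    let s : ℂ := Complex.I * (Real.sqrt (-Δ) : ℝ)
    let cp : ℂ := a * (((2 * (d : ℝ) + 1 + ‖a‖ ^ 2 : ℝ) : ℂ) + s) /
      (2 * ((d : ℂ) + 1) * ((‖a‖ ^ 2 : ℝ) : ℂ))
    let cm : ℂ := a * (((2 * (d : ℝ) + 1 + ‖a‖ ^ 2 : ℝ) : ℂ) - s) /
      (2 * ((d : ℂ) + 1) * ((‖a‖ ^ 2 : ℝ) : ℂ))
    (starRingEnd ℂ a * ((d : ℂ) + 1) * cp ^ 2
        - ((2 * (d : ℝ) + 1 + ‖a‖ ^ 2 : ℝ) : ℂ) * cp + a * ((d : ℂ) + 1) = 0) ∧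
    (starRingEnd ℂ a * ((d : ℂ) + 1) * cm ^ 2
        - ((2 * (d : ℝ) + 1 + ‖a‖ ^ 2 : ℝ) : ℂ) * cm + a * ((d : ℂ) + 1) = 0) ∧
    ‖cp‖ = 1 ∧ ‖cm‖ = 1 ∧
    (cp = cm ↔ ‖a‖ = 1 ∨ ‖a‖ = 2 * d + 1) := by
  intro Δ s cp cm
  have ha : a ≠ 0 := norm_pos_iff.mp (one_pos.trans_le h1)
  have hk : (d : ℂ) + 1 ≠ 0 := by exact_mod_cast d.succ_ne_zero
  have hΔ : Δ ≤ 0 :=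
    mul_nonpos_of_nonpos_of_nonneg (by nlinarith [norm_nonneg a]) (by nlinarith)
  have hw : Real.sqrt (-Δ) ^ 2 = -Δ := Real.sq_sqrt (neg_nonneg.mpr hΔ)
  have hs : s ^ 2 = ((2 * (d : ℝ) + 1 + ‖a‖ ^ 2 : ℝ) : ℂ) ^ 2
      - 4 * ((d : ℂ) + 1) ^ 2 * ((‖a‖ ^ 2 : ℝ) : ℂ) := by
    simp only [s, mul_pow, I_sq, ← ofReal_pow, hw, Δ]
    push_cast
    ring
  have hnorm (w : ℝ) (hw' : w ^ 2 = -Δ) :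
      ‖((2 * (d : ℝ) + 1 + ‖a‖ ^ 2 : ℝ) : ℂ) + I * w‖ = 2 * ‖(d : ℂ) + 1‖ * ‖a‖ := by
    have hnk : ‖(d : ℂ) + 1‖ = d + 1 := by exact_mod_cast norm_natCast (d + 1)
    exact norm_ofReal_add_I_mul_eq (by positivity) (by rw [hw', hnk]; ring)
  have hcp : cp = conjQuadraticRoot a ((d : ℂ) + 1) (2 * (d : ℝ) + 1 + ‖a‖ ^ 2 : ℝ) s := rfl
  have hcm : cm = conjQuadraticRoot a ((d : ℂ) + 1) (2 * (d : ℝ) + 1 + ‖a‖ ^ 2 : ℝ) (-s) := by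
    simp only [cm, conjQuadraticRoot, sub_eq_add_neg]
  rw [hcp, hcm]
  refine ⟨conjQuadraticRoot_isRoot ha hk hs, conjQuadraticRoot_isRoot ha hk (by rw [neg_sq, hs]),
    norm_conjQuadraticRoot ha hk (hnorm _ hw), norm_conjQuadraticRoot ha hk ?_, ?_⟩
  · simpa [s] using hnorm (-Real.sqrt (-Δ)) (by rw [neg_sq, hw])
  · rw [conjQuadraticRoot_eq_neg_iff ha hk,
      ← sq_sub_sq_mul_sq_sub_one_eq_zero_iff (norm_nonneg a) (by positivity)]
    change s = 0 ↔ Δ = 0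
    simp only [s, mul_eq_zero, I_ne_zero, false_or, ofReal_eq_zero, Real.sqrt_eq_zero',
      neg_nonpos]
    exact ⟨hΔ.antisymm, ge_of_eq⟩

/-- For `1 ≤ |a| ≤ 2d+1` the free critical points `c±` of `B_a` (roots of the
quadratic `h`) lie on the unit circle, and they coincide iff `|a| = 1` or
`|a| = 2d+1`. -/
theorem stmt6 (d : ℕ) (hd : 1 ≤ d) (a : ℂ) (ha : a ≠ 0)
    (h1 : 1 ≤ ‖a‖) (h2 : ‖a‖ ≤ 2 * d + 1) :
    let Δ : ℝ := (‖a‖ ^ 2 - (2 * (d : ℝ) + 1) ^ 2) * (‖a‖ ^ 2 - 1)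
    let s : ℂ := Complex.I * (Real.sqrt (-Δ) : ℝ)
    let cp : ℂ := a * (((2 * (d : ℝ) + 1 + ‖a‖ ^ 2 : ℝ) : ℂ) + s) /
      (2 * ((d : ℂ) + 1) * ((‖a‖ ^ 2 : ℝ) : ℂ))
    let cm : ℂ := a * (((2 * (d : ℝ) + 1 + ‖a‖ ^ 2 : ℝ) : ℂ) - s) /
      (2 * ((d : ℂ) + 1) * ((‖a‖ ^ 2 : ℝ) : ℂ))
    (starRingEnd ℂ a * ((d : ℂ) + 1) * cp ^ 2
        - ((2 * (d : ℝ) + 1 + ‖a‖ ^ 2 : ℝ) : ℂ) * cp + a * ((d : ℂ) + 1) = 0) ∧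
    (starRingEnd ℂ a * ((d : ℂ) + 1) * cm ^ 2
        - ((2 * (d : ℝ) + 1 + ‖a‖ ^ 2 : ℝ) : ℂ) * cm + a * ((d : ℂ) + 1) = 0) ∧
    ‖cp‖ = 1 ∧ ‖cm‖ = 1 ∧
    (cp = cm ↔ ‖a‖ = 1 ∨ ‖a‖ = 2 * d + 1) :=
  stmt6_general d a h1 h2
end

section
/- Let d ≥ 1 and a ∈ ℂ with |a| > 2d+1. Let c± be the two roots of h(z) = ā(d+1)z² − (2d+1+|a|²)z + a(d+1). Then c₊ · conj(c₋) = 1 (the roots are symmetric with respect to the unit circle), and (with |c₊| ≥ |c₋|) one has 1 < |c₊| < |a| and 1/|a| < |c₋| < 1. -/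
/-!
Write `r = ‖a‖`, `u = a / r` and `k = d + 1`. Because `conj a * a = r²`, the quadratic factors as
`k · conj a · (z - t u) (z - t⁻¹ u)` as soon as `r (t + t⁻¹) = (2d + 1 + r²) / k`, so its roots are
`t u` and `t⁻¹ u`, which are conjugate-reciprocal. Such a `t > 1` exists because the right-hand
side exceeds `2r`, which amounts to `(r - 1)(r - (2d + 1)) > 0`; and `t < r` because
`x ↦ x + x⁻¹` is increasing on `[1, ∞)` while the right-hand side is less than `r (r + r⁻¹)`,
which amounts to `d (r² - 1) > 0`.
-/

open ComplexConjugate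

lemma exists_one_lt_add_inv_eq {s : ℝ} (hs : 2 < s) : ∃ t : ℝ, 1 < t ∧ t + t⁻¹ = s := by
  set q := √(s ^ 2 - 4)
  have hq : q ^ 2 = s ^ 2 - 4 := Real.sq_sqrt (by nlinarith)
  have hq0 : 0 ≤ q := Real.sqrt_nonneg _
  refine ⟨(s + q) / 2, by linarith, ?_⟩
  have hinv : ((s + q) / 2)⁻¹ = (s - q) / 2 := by
    rw [inv_eq_iff_eq_inv, eq_comm, inv_eq_of_mul_eq_one_right]
    linear_combination -hq / 4
  rw [hinv]
  ring

lemma lt_of_add_inv_lt_add_inv {t r : ℝ} (hr : 1 ≤ r) (h : t + t⁻¹ < r + r⁻¹) : t < r := by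
  by_contra! hrt
  have hr0 : 0 < r := by linarith
  have ht0 : 0 < t := by linarith
  have hdiff : t + t⁻¹ - (r + r⁻¹) = (t - r) * (t * r - 1) / (t * r) := by field_simp; ring
  have : 0 ≤ t + t⁻¹ - (r + r⁻¹) := by
    rw [hdiff]
    exact div_nonneg (mul_nonneg (by linarith) (by nlinarith)) (by positivity)
  linarith

lemma exists_mem_Ioo_mul_add_inv_eq {d r : ℝ} (hd : 1 ≤ d) (hr : 2 * d + 1 < r) :
    ∃ t ∈ Set.Ioo 1 r, r * (t + t⁻¹) = (2 * d + 1 + r ^ 2) / (d + 1) := by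
  have hr1 : 1 < r := by linarith
  have hk : 0 < r * (d + 1) := by positivity
  have hgap : 0 < (r - 1) * (r - (2 * d + 1)) := mul_pos (by linarith) (by linarith)
  set s := (2 * d + 1 + r ^ 2) / (r * (d + 1)) with hs
  have hs2 : 2 < s := by
    rw [hs, lt_div_iff₀ hk]
    nlinarith
  have hsr : s < r + r⁻¹ := by
    rw [hs, div_lt_iff₀ hk]
    field_simp
    nlinarith
  obtain ⟨t, ht1, hts⟩ := exists_one_lt_add_inv_eq hs2
  refine ⟨t, ⟨ht1, lt_of_add_inv_lt_add_inv hr1.le (hts ▸ hsr)⟩, ?_⟩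
  rw [hts, hs]
  field_simp

lemma conj_mul_sq_sub_add_eq_mul (a : ℂ) {t : ℝ} (ht : t ≠ 0) (z : ℂ) :
    conj a * z ^ 2 - ((‖a‖ * (t + t⁻¹) : ℝ) : ℂ) * z + a
      = conj a * (z - t * (a / ‖a‖)) * (z - t⁻¹ * (a / ‖a‖)) := by
  rcases eq_or_ne a 0 with rfl | ha
  · simp
  have hn : (‖a‖ : ℂ) ≠ 0 := by simpa using ha
  have htc : (t : ℂ) ≠ 0 := by exact_mod_cast ht
  push_cast
  field_simp
  linear_combination (z * ‖a‖ * (1 + (t : ℂ) ^ 2) - t * a) * Complex.conj_mul' a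

lemma eq_or_eq_of_conj_mul_sq_sub_add_eq_zero {a : ℂ} (ha : a ≠ 0) {t : ℝ} (ht : t ≠ 0) {z : ℂ}
    (hz : conj a * z ^ 2 - ((‖a‖ * (t + t⁻¹) : ℝ) : ℂ) * z + a = 0) :
    z = t * (a / ‖a‖) ∨ z = t⁻¹ * (a / ‖a‖) := by
  rw [conj_mul_sq_sub_add_eq_mul a ht, mul_assoc, mul_eq_zero, mul_eq_zero] at hz
  rcases hz with hz | hz | hz
  · exact absurd hz (by simpa using ha)
  · exact .inl (sub_eq_zero.mp hz)
  · exact .inr (sub_eq_zero.mp hz)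

lemma ofReal_mul_mul_conj_ofReal_inv_mul {t : ℝ} (ht : t ≠ 0) {u : ℂ} (hu : ‖u‖ = 1) :
    (t * u) * conj (t⁻¹ * u) = 1 := by
  have htc : (t : ℂ) ≠ 0 := by exact_mod_cast ht
  rw [map_mul, Complex.conj_ofReal, mul_mul_mul_comm, Complex.mul_conj', hu]
  push_cast
  field_simp

lemma eq_and_eq_of_norm_le_norm {E : Type*} [Norm E] {x y p m : E} (hp : p = x ∨ p = y)
    (hm : m = x ∨ m = y) (hne : p ≠ m) (hord : ‖m‖ ≤ ‖p‖) (hxy : ‖y‖ < ‖x‖) :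
    p = x ∧ m = y := by
  rcases hp with rfl | rfl <;> rcases hm with rfl | rfl
  · exact absurd rfl hne
  · exact ⟨rfl, rfl⟩
  · exact absurd hord hxy.not_ge
  · exact absurd rfl hne

/-- For `|a| > 2d+1`, the two roots `c±` of `h` are symmetric with respect to
the unit circle and satisfy `1 < |c₊| < |a|` and `1/|a| < |c₋| < 1`. -/
theorem stmt7 (d : ℕ) (hd : 1 ≤ d) (a : ℂ) (ha : 2 * d + 1 < ‖a‖)
    (cp cm : ℂ)
    (hp : starRingEnd ℂ a * ((d : ℂ) + 1) * cp ^ 2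
        - ((2 * (d : ℝ) + 1 + ‖a‖ ^ 2 : ℝ) : ℂ) * cp + a * ((d : ℂ) + 1) = 0)
    (hm : starRingEnd ℂ a * ((d : ℂ) + 1) * cm ^ 2
        - ((2 * (d : ℝ) + 1 + ‖a‖ ^ 2 : ℝ) : ℂ) * cm + a * ((d : ℂ) + 1) = 0)
    (hne : cp ≠ cm)
    (hord : ‖cm‖ ≤ ‖cp‖) :
    cp * starRingEnd ℂ cm = 1 ∧
    1 < ‖cp‖ ∧ ‖cp‖ < ‖a‖ ∧
    1 / ‖a‖ < ‖cm‖ ∧ ‖cm‖ < 1 := by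
  obtain ⟨t, ⟨ht1, htr⟩, hts⟩ := exists_mem_Ioo_mul_add_inv_eq (d := d) (by exact_mod_cast hd) ha
  have ha0 : a ≠ 0 := norm_pos_iff.mp (by linarith)
  have ht : 0 < t := by linarith
  have hroot (z : ℂ) (hz : conj a * ((d : ℂ) + 1) * z ^ 2
      - ((2 * (d : ℝ) + 1 + ‖a‖ ^ 2 : ℝ) : ℂ) * z + a * ((d : ℂ) + 1) = 0) :
      z = t * (a / ‖a‖) ∨ z = t⁻¹ * (a / ‖a‖) := by
    refine eq_or_eq_of_conj_mul_sq_sub_add_eq_zero ha0 ht.ne' ?_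
    have hd0 : (d : ℂ) + 1 ≠ 0 := by exact_mod_cast Nat.succ_ne_zero d
    rw [hts]
    push_cast at hz ⊢
    field_simp
    linear_combination hz
  have hu : ‖a / ‖a‖‖ = 1 := by simp [ha0]
  have hnorm (x : ℝ) (hx : 0 < x) : ‖(x : ℂ) * (a / ‖a‖)‖ = x := by
    rw [norm_mul, hu, mul_one, Complex.norm_of_nonneg hx.le]
  obtain ⟨rfl, rfl⟩ := eq_and_eq_of_norm_le_norm (hroot cp hp) (hroot cm hm) hne hord
    (by rw [hnorm t ht, hnorm t⁻¹ (inv_pos.2 ht)]; exact (inv_lt_one_of_one_lt₀ ht1).trans ht1)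
  rw [hnorm t ht, hnorm t⁻¹ (inv_pos.2 ht), one_div]
  exact ⟨ofReal_mul_mul_conj_ofReal_inv_mul ht.ne' hu, ht1, htr, inv_strictAnti₀ ht htr,
    inv_lt_one_of_one_lt₀ ht1⟩
end

section
/- Let d ≥ 1 and a ∈ ℂ with 0 < |a| < 1. Let c± be the two roots of h(z) = ā(d+1)z² − (2d+1+|a|²)z + a(d+1), with |c₋| ≤ |c₊|. Then c₊·conj(c₋) = 1, |c₋| < |a| < 1, and |c₊| > 1/|a| > 1. -/
/-!
Substituting `w = conj a * z` turns `conj a * h z` into the real quadratic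
`q w = (d + 1) w² - (2d + 1 + |a|²) w + (d + 1) |a|²` (`reducedQuad d ‖a‖`), with `q 1 = d (|a|² - 1) < 0`.
Hence `q` has real roots `w₋ < 1 < w₊` with `w₋ w₊ = |a|²`, and `c± = w± / conj a`, so that
`c₊ conj c₋ = w₊ w₋ / |a|² = 1`, `|c₋| = w₋ / |a| < |a|` and `|c₊| = w₊ / |a| > 1 / |a|`.
-/

open ComplexConjugate

theorem quadratic_eq_mul_sub_mul_sub_of_ne {R : Type*} [CommRing R] [NoZeroDivisors R]
    {A B C x y : R} (hx : A * (x * x) + B * x + C = 0) (hy : A * (y * y) + B * y + C = 0)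
    (hxy : x ≠ y) (t : R) : A * (t * t) + B * t + C = A * ((t - x) * (t - y)) := by
  have hsum : A * (x + y) + B = 0 := by
    have h : (x - y) * (A * (x + y) + B) = 0 := by linear_combination hx - hy
    exact (mul_eq_zero.mp h).resolve_left (sub_ne_zero.mpr hxy)
  linear_combination hx + (t - x) * hsum

theorem discrim_pos_of_quadratic_neg {K : Type*} [Field K] [LinearOrder K] [IsStrictOrderedRing K]
    {a b c x : K} (ha : 0 < a) (hx : a * (x * x) + b * x + c < 0) : 0 < discrim a b c := by
  have h : discrim a b c = (2 * a * x + b) ^ 2 - 4 * a * (a * (x * x) + b * x + c) := by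
    unfold discrim; ring
  rw [h]
  nlinarith [sq_nonneg (2 * a * x + b), mul_neg_of_pos_of_neg ha hx]

theorem Complex.exists_ofReal_eq_of_quadratic {a b c : ℝ} (ha : a ≠ 0) (hD : 0 ≤ discrim a b c)
    {z : ℂ} (hz : (a : ℂ) * (z * z) + b * z + c = 0) : ∃ x : ℝ, (x : ℂ) = z := by
  have hs : discrim (a : ℂ) b c = (√(discrim a b c) : ℂ) * √(discrim a b c) := by
    rw [← Complex.ofReal_mul, Real.mul_self_sqrt hD]; simp [discrim]
  rcases (quadratic_eq_zero_iff (by exact_mod_cast ha) hs z).mp hz with h | h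
  · exact ⟨(-b + √(discrim a b c)) / (2 * a), by rw [h]; push_cast; ring⟩
  · exact ⟨(-b - √(discrim a b c)) / (2 * a), by rw [h]; push_cast; ring⟩

theorem pos_lt_one_lt_of_mul_pos {K : Type*} [Field K] [LinearOrder K] [IsStrictOrderedRing K]
    {x y : K} (hxy : 0 < x * y) (hsep : (1 - x) * (1 - y) < 0) (habs : |y| ≤ |x|) :
    0 < y ∧ y < 1 ∧ 1 < x := by
  rcases mul_pos_iff.mp hxy with ⟨hx, hy⟩ | ⟨hx, hy⟩
  · rw [abs_of_pos hx, abs_of_pos hy] at habs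
    refine ⟨hy, ?_, ?_⟩ <;> nlinarith
  · nlinarith

theorem conj_mul_quadratic (a z : ℂ) (k S : ℝ) :
    conj a * (conj a * k * z ^ 2 - S * z + a * k)
      = k * ((conj a * z) * (conj a * z)) + ((-S : ℝ) : ℂ) * (conj a * z)
        + ((k * ‖a‖ ^ 2 : ℝ) : ℂ) := by
  push_cast
  linear_combination (k : ℂ) * Complex.conj_mul' a

def reducedQuad (d : ℕ) (r t : ℝ) : ℝ :=
  (d + 1) * (t * t) + -(2 * d + 1 + r ^ 2) * t + (d + 1) * r ^ 2

theorem reducedQuad_one_neg {d : ℕ} (hd : 1 ≤ d) {r : ℝ} (hr : r ^ 2 < 1) :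
    reducedQuad d r 1 < 0 := by
  have hd0 : (0 : ℝ) < d := by exact_mod_cast hd
  unfold reducedQuad
  linear_combination (exp := 1) mul_lt_mul_of_pos_left hr hd0

theorem reducedQuad_roots {d : ℕ} (hd : 1 ≤ d) {r : ℝ} (hr0 : 0 < r) (hr1 : r < 1) {x y : ℝ}
    (hx : reducedQuad d r x = 0) (hy : reducedQuad d r y = 0) (hxy : x ≠ y) (habs : |y| ≤ |x|) :
    x * y = r ^ 2 ∧ 0 < y ∧ y < 1 ∧ 1 < x := by
  have hk : (0 : ℝ) < d + 1 := by positivity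
  have hfac := quadratic_eq_mul_sub_mul_sub_of_ne hx hy hxy
  have hprod : x * y = r ^ 2 := by
    have h := hfac 0
    simp only [mul_zero, zero_add, zero_sub, neg_mul_neg] at h
    exact (mul_left_cancel₀ hk.ne' h).symm
  have hsep : (1 - x) * (1 - y) < 0 := by
    have h := reducedQuad_one_neg hd (r := r) (by nlinarith)
    rw [reducedQuad, hfac 1] at h
    exact neg_of_mul_neg_right h hk.le
  exact ⟨hprod, pos_lt_one_lt_of_mul_pos (hprod ▸ by positivity) hsep habs⟩

theorem exists_ofReal_eq_conj_mul_of_root {d : ℕ} (hd : 1 ≤ d) {a z : ℂ} (ha1 : ‖a‖ < 1)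
    (hz : conj a * ((d : ℂ) + 1) * z ^ 2
        - ((2 * (d : ℝ) + 1 + ‖a‖ ^ 2 : ℝ) : ℂ) * z + a * ((d : ℂ) + 1) = 0) :
    ∃ u : ℝ, (u : ℂ) = conj a * z ∧ reducedQuad d ‖a‖ u = 0 := by
  have hq : ((d + 1 : ℝ) : ℂ) * ((conj a * z) * (conj a * z))
      + ((-(2 * d + 1 + ‖a‖ ^ 2) : ℝ) : ℂ) * (conj a * z) + (((d + 1) * ‖a‖ ^ 2 : ℝ) : ℂ) = 0 := by
    rw [← conj_mul_quadratic]; push_cast at hz ⊢; rw [hz, mul_zero]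
  have hD := discrim_pos_of_quadratic_neg (by positivity)
    (reducedQuad_one_neg hd (r := ‖a‖) (by nlinarith [norm_nonneg a]))
  obtain ⟨u, hu⟩ := Complex.exists_ofReal_eq_of_quadratic (by positivity) hD.le hq
  refine ⟨u, hu, ?_⟩
  rw [← hu] at hq
  unfold reducedQuad
  exact_mod_cast hq

/-- For `0 < |a| < 1`, the two roots `c±` of `h` satisfy `c₊·conj c₋ = 1`,
`|c₋| < |a| < 1` and `|c₊| > 1/|a| > 1`. -/
theorem stmt8 (d : ℕ) (hd : 1 ≤ d) (a : ℂ) (ha0 : 0 < ‖a‖)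
    (ha1 : ‖a‖ < 1)
    (cp cm : ℂ)
    (hp : starRingEnd ℂ a * ((d : ℂ) + 1) * cp ^ 2
        - ((2 * (d : ℝ) + 1 + ‖a‖ ^ 2 : ℝ) : ℂ) * cp + a * ((d : ℂ) + 1) = 0)
    (hm : starRingEnd ℂ a * ((d : ℂ) + 1) * cm ^ 2
        - ((2 * (d : ℝ) + 1 + ‖a‖ ^ 2 : ℝ) : ℂ) * cm + a * ((d : ℂ) + 1) = 0)
    (hne : cp ≠ cm)
    (hord : ‖cm‖ ≤ ‖cp‖) :
    cp * starRingEnd ℂ cm = 1 ∧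
    ‖cm‖ < ‖a‖ ∧ ‖a‖ < 1 ∧
    1 / ‖a‖ < ‖cp‖ ∧ 1 < 1 / ‖a‖ := by
  have ha : conj a ≠ 0 := by simpa [← norm_pos_iff] using ha0
  obtain ⟨up, hup, hupq⟩ := exists_ofReal_eq_conj_mul_of_root hd ha1 hp
  obtain ⟨um, hum, humq⟩ := exists_ofReal_eq_conj_mul_of_root hd ha1 hm
  have hnorm : ∀ (z : ℂ) (u : ℝ), (u : ℂ) = conj a * z → |u| = ‖a‖ * ‖z‖ := fun z u h => by
    rw [← Real.norm_eq_abs, ← Complex.norm_real, h, norm_mul, Complex.norm_conj]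
  obtain ⟨hprod, hum0, hum1, hup1⟩ := reducedQuad_roots hd ha0 ha1 hupq humq
    (fun h => hne (mul_left_cancel₀ ha (by rw [← hup, ← hum, h])))
    (by rw [hnorm _ _ hup, hnorm _ _ hum]; gcongr)
  have hupn : up = ‖a‖ * ‖cp‖ := by rw [← hnorm _ _ hup, abs_of_pos (by linarith)]
  have humn : um = ‖a‖ * ‖cm‖ := by rw [← hnorm _ _ hum, abs_of_pos hum0]
  refine ⟨?_, by nlinarith, ha1, by rw [div_lt_iff₀ ha0]; linarith, by rw [lt_div_iff₀ ha0]; linarith⟩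
  have hum' : (um : ℂ) = a * conj cm := by simpa using congrArg conj hum
  refine mul_left_cancel₀ (mul_ne_zero ha (by simpa using ha)) ?_
  calc conj a * a * (cp * conj cm) = up * um := by rw [hup, hum']; ring
    _ = conj a * a * 1 := by rw [mul_one, Complex.conj_mul']; exact_mod_cast hprod
end

section
/- Let D ⊂ ℂ be a domain, K ⊂ D compact, and φ: D → D holomorphic such that the family of iterates {φⁿ} has only constant limit functions on D (equivalently, φ is a strict contraction of the Poincaré metric with uniform contraction factor on K ∪ φ(K)). Then there exist C > 0 and λ ∈ (0,1) with diam(φᵏ(K)) ≤ C·λᵏ for all k; in particular diam(φᵏ(K)) → 0 and the series Σ_k diam(φᵏ(K)) converges. -/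
/-!
Instead of the hyperbolic metric of `D` we use the Carathéodory pseudodistance of a Euclidean
thickening `U ⊆ D` of the compact connected set `L = closure (φ '' D)`. The Schwarz lemma bounds
it by `1/2` along short Euclidean steps, and pseudo-hyperbolic distances compose by
`(r, s) ↦ (r + s) / (1 + r s)`, so connectedness and compactness of `L` give a uniform bound
`ρ < 1` on `L × L`. Then for `ρ < c < 1` and `f : U → 𝔻` vanishing at `φ^[k+1] z`, the map
`f ∘ φ / c` is again admissible, which by induction bounds the pseudodistance between
`φ^[k] z` and `φ^[k] w` by `c ^ k`; on the bounded set `U` it dominates Euclidean distance.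
-/

open Complex ComplexConjugate Metric Set Function

noncomputable def blaschkeFactor (a z : ℂ) : ℂ := (z - a) / (1 - conj a * z)

lemma sq_norm_one_sub_conj_mul_sub_sq_norm_sub (a z : ℂ) :
    ‖1 - conj a * z‖ ^ 2 - ‖z - a‖ ^ 2 = (1 - ‖a‖ ^ 2) * (1 - ‖z‖ ^ 2) := by
  simp only [← normSq_eq_norm_sq, normSq_apply, mul_re, mul_im, sub_re, sub_im, one_re, one_im,
    conj_re, conj_im]
  ring

lemma one_sub_norm_mul_le_norm_one_sub_conj_mul (a z : ℂ) : 1 - ‖a‖ * ‖z‖ ≤ ‖1 - conj a * z‖ := by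
  simpa [norm_mul] using norm_sub_norm_le (1 : ℂ) (conj a * z)

lemma one_sub_conj_mul_ne_zero {a z : ℂ} (ha : ‖a‖ < 1) (hz : ‖z‖ < 1) :
    1 - conj a * z ≠ 0 := by
  rw [← norm_pos_iff]
  have := one_sub_norm_mul_le_norm_one_sub_conj_mul a z
  nlinarith [norm_nonneg a, norm_nonneg z]

lemma norm_blaschkeFactor_lt_one {a z : ℂ} (ha : ‖a‖ < 1) (hz : ‖z‖ < 1) :
    ‖blaschkeFactor a z‖ < 1 := by
  have hd := norm_pos_iff.2 (one_sub_conj_mul_ne_zero ha hz)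
  have key := sq_norm_one_sub_conj_mul_sub_sq_norm_sub a z
  rw [blaschkeFactor, norm_div, div_lt_one hd]
  have hP : 0 < (1 - ‖a‖ ^ 2) * (1 - ‖z‖ ^ 2) :=
    mul_pos (by nlinarith [norm_nonneg a]) (by nlinarith [norm_nonneg z])
  nlinarith [norm_nonneg (z - a)]

lemma norm_le_of_norm_blaschkeFactor {a z : ℂ} (ha : ‖a‖ < 1) (hz : ‖z‖ < 1) :
    ‖z‖ ≤ (‖a‖ + ‖blaschkeFactor a z‖) / (1 + ‖a‖ * ‖blaschkeFactor a z‖) := by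
  have hd0 : 0 < ‖1 - conj a * z‖ := norm_pos_iff.2 (one_sub_conj_mul_ne_zero ha hz)
  have hyd : ‖blaschkeFactor a z‖ * ‖1 - conj a * z‖ = ‖z - a‖ := by
    rw [blaschkeFactor, norm_div, div_mul_cancel₀ _ hd0.ne']
  have key := sq_norm_one_sub_conj_mul_sub_sq_norm_sub a z
  have hd := one_sub_norm_mul_le_norm_one_sub_conj_mul a z
  set x := ‖a‖
  set b := ‖z‖
  set y := ‖blaschkeFactor a z‖
  set d := ‖1 - conj a * z‖
  have hx : 0 ≤ x := norm_nonneg a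
  have hb : 0 ≤ b := norm_nonneg z
  have hy : 0 ≤ y := norm_nonneg _
  rw [le_div_iff₀ (by positivity)]
  -- by `key`, `y (1 - x b) ≥ b - x` reduces to `d ≥ 1 - x b`
  suffices b - x ≤ y * (1 - x * b) by linarith
  rcases le_or_gt b x with hbx | hxb
  · nlinarith [mul_nonneg hy (by nlinarith : (0:ℝ) ≤ 1 - x * b)]
  have hP : 0 < (1 - x ^ 2) * (1 - b ^ 2) := mul_pos (by nlinarith) (by nlinarith)
  have h1 : 0 < 1 - x * b := by nlinarith
  have hsq : (b - x) ^ 2 ≤ (y * (1 - x * b)) ^ 2 := by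
    have : (b - x) ^ 2 * d ^ 2 ≤ (y * d) ^ 2 * (1 - x * b) ^ 2 := by
      rw [hyd]
      nlinarith [mul_le_mul_of_nonneg_left (pow_le_pow_left₀ h1.le hd 2) hP.le]
    nlinarith [pow_pos hd0 2]
  exact abs_le_of_sq_le_sq' hsq (by positivity) |>.2

lemma add_div_one_add_mul_le_add_div_one_add_mul {x₁ x₂ y₁ y₂ : ℝ} (hx₁ : 0 ≤ x₁) (hx₂ : x₂ ≤ 1)
    (hx : x₁ ≤ x₂) (hy₁ : 0 ≤ y₁) (hy₂ : y₂ ≤ 1) (hy : y₁ ≤ y₂) :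
    (x₁ + y₁) / (1 + x₁ * y₁) ≤ (x₂ + y₂) / (1 + x₂ * y₂) := by
  rw [div_le_div_iff₀ (by positivity) (by nlinarith)]
  nlinarith [mul_nonneg (sub_nonneg.2 hx) (sub_nonneg.2 (by nlinarith : y₁ * y₂ ≤ 1)),
    mul_nonneg (sub_nonneg.2 hy) (sub_nonneg.2 (by nlinarith : x₁ * x₂ ≤ 1))]

lemma add_div_one_add_mul_lt_one {x y : ℝ} (hx₀ : 0 ≤ x) (hx : x < 1) (hy₀ : 0 ≤ y) (hy : y < 1) :
    (x + y) / (1 + x * y) < 1 := by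
  rw [div_lt_one (by positivity)]
  nlinarith [mul_pos (sub_pos.2 hx) (sub_pos.2 hy)]

lemma DifferentiableOn.blaschkeFactor {f : ℂ → ℂ} {U : Set ℂ} {a : ℂ}
    (hf : DifferentiableOn ℂ f U) (hfU : MapsTo f U (ball 0 1)) (ha : ‖a‖ < 1) :
    DifferentiableOn ℂ (fun z => blaschkeFactor a (f z)) U :=
  (hf.sub_const a).div ((differentiableOn_const 1).sub ((differentiableOn_const _).mul hf))
    fun _ hz => one_sub_conj_mul_ne_zero ha (mem_ball_zero_iff.1 (hfU hz))

lemma MapsTo.blaschkeFactor {f : ℂ → ℂ} {U : Set ℂ} {a : ℂ} (hfU : MapsTo f U (ball 0 1))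
    (ha : ‖a‖ < 1) : MapsTo (fun z => blaschkeFactor a (f z)) U (ball 0 1) := fun _ hz =>
  mem_ball_zero_iff.2 (norm_blaschkeFactor_lt_one ha (mem_ball_zero_iff.1 (hfU hz)))

/-- `CaratheodoryLE U u v r`: the Carathéodory pseudodistance of `U`, normalized as the
pseudo-hyperbolic distance of the unit disc, between `u` and `v` is at most `r`. -/
def CaratheodoryLE (U : Set ℂ) (u v : ℂ) (r : ℝ) : Prop :=
  ∀ f : ℂ → ℂ, DifferentiableOn ℂ f U → MapsTo f U (ball 0 1) → f u = 0 → ‖f v‖ ≤ r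

namespace CaratheodoryLE

variable {U : Set ℂ} {u v w : ℂ} {r s : ℝ}

lemma nonneg (h : CaratheodoryLE U u v r) : 0 ≤ r := by
  simpa using h 0 (differentiableOn_const 0) (fun _ _ => by simp) rfl

lemma mono (h : CaratheodoryLE U u v r) (hrs : r ≤ s) : CaratheodoryLE U u v s :=
  fun f hf hfU hfu => (h f hf hfU hfu).trans hrs

lemma symm (h : CaratheodoryLE U u v r) (hu : u ∈ U) : CaratheodoryLE U v u r := by
  intro f hf hfU hfv
  have ha : ‖f u‖ < 1 := mem_ball_zero_iff.1 (hfU hu)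
  simpa [_root_.blaschkeFactor, hfv] using
    h _ (hf.blaschkeFactor hfU ha) (MapsTo.blaschkeFactor hfU ha) (by simp [_root_.blaschkeFactor])

/-- The triangle inequality of the pseudo-hyperbolic distance, after moving `f v` to `0`. -/
lemma trans (h₁ : CaratheodoryLE U u v r) (h₂ : CaratheodoryLE U v w s) (hv : v ∈ U)
    (hw : w ∈ U) (hr : r ≤ 1) (hs : s ≤ 1) : CaratheodoryLE U u w ((r + s) / (1 + r * s)) := by
  intro f hf hfU hfu
  have ha : ‖f v‖ < 1 := mem_ball_zero_iff.1 (hfU hv)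
  have hmove : ‖blaschkeFactor (f v) (f w)‖ ≤ s :=
    h₂ _ (hf.blaschkeFactor hfU ha) (MapsTo.blaschkeFactor hfU ha) (by simp [_root_.blaschkeFactor])
  exact (norm_le_of_norm_blaschkeFactor ha (mem_ball_zero_iff.1 (hfU hw))).trans <|
    add_div_one_add_mul_le_add_div_one_add_mul (norm_nonneg _) hr (h₁ f hf hfU hfu)
      (norm_nonneg _) hs hmove

lemma dist_le (h : CaratheodoryLE U u v r) {a : ℂ} {R : ℝ} (hU : U ⊆ ball a R) (hu : u ∈ U) :
    dist v u ≤ 2 * R * r := by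
  have hR : 0 < 2 * R := by linarith [pos_of_mem_ball (hU hu)]
  have hmaps : MapsTo (fun z => (z - u) / (2 * R : ℝ)) U (ball 0 1) := by
    intro z hz
    rw [mem_ball_zero_iff, norm_div, norm_real, Real.norm_of_nonneg hR.le, div_lt_one hR,
      ← dist_eq_norm]
    linarith [dist_triangle_right z u a, mem_ball.1 (hU hz), mem_ball.1 (hU hu)]
  have := h _ ((differentiableOn_id.sub_const u).div_const _) hmaps (by simp)
  rwa [norm_div, norm_real, Real.norm_of_nonneg hR.le, div_le_iff₀ hR, ← dist_eq_norm,
    mul_comm] at this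

end CaratheodoryLE

lemma caratheodoryLE_of_mem_ball {U : Set ℂ} {u v : ℂ} {s : ℝ} (hball : ball u s ⊆ U)
    (hv : v ∈ ball u s) : CaratheodoryLE U u v (dist v u / s) := by
  intro f hf hfU hfu
  have hmaps : MapsTo f (ball u s) (closedBall (f u) 1) := fun z hz => by
    simpa [hfu] using (mem_ball_zero_iff.1 (hfU (hball hz))).le
  have := Complex.dist_le_div_mul_dist_of_mapsTo_ball (hf.mono hball) hmaps hv
  rwa [hfu, dist_zero_right, one_div_mul_eq_div] at this

lemma caratheodoryLE_half_of_mem_ball {U : Set ℂ} {u v : ℂ} {δ : ℝ} (hball : ball u δ ⊆ U)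
    (hv : v ∈ ball u (δ / 2)) : CaratheodoryLE U u v (1 / 2) := by
  have hδ : 0 < δ := by linarith [pos_of_mem_ball hv]
  refine (caratheodoryLE_of_mem_ball hball (ball_subset_ball (half_le_self hδ.le) hv)).mono ?_
  rw [div_le_iff₀ hδ]
  linarith [mem_ball.1 hv]

lemma IsPreconnected.exists_caratheodoryLE_lt_one {U L : Set ℂ} (hL : IsPreconnected L) {δ : ℝ}
    (hδ : 0 < δ) (hLU : ∀ x ∈ L, ball x δ ⊆ U) {u v : ℂ} (hu : u ∈ L) (hv : v ∈ L) :
    ∃ r < 1, CaratheodoryLE U u v r := by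
  have hmem : ∀ x ∈ L, x ∈ U := fun x hx => hLU x hx (mem_ball_self hδ)
  refine hL.induction₂ (fun u v => ∃ r < 1, CaratheodoryLE U u v r) (fun x hx => ?_)
    (fun x y z _ hy hz ⟨r, hr, hxy⟩ ⟨s, hs, hyz⟩ => ?_) (fun x y hx _ ⟨r, hr, hxy⟩ => ?_) hu hv
  · filter_upwards [nhdsWithin_le_nhds (ball_mem_nhds x (half_pos hδ))] with y hy
    exact ⟨1 / 2, by norm_num, caratheodoryLE_half_of_mem_ball (hLU x hx) hy⟩
  · exact ⟨_, add_div_one_add_mul_lt_one hxy.nonneg hr hyz.nonneg hs,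
      hxy.trans hyz (hmem y hy) (hmem z hz) hr.le hs.le⟩
  · exact ⟨r, hr, hxy.symm (hmem x hx)⟩

lemma IsCompact.exists_caratheodoryLE_lt_one {U L : Set ℂ} (hLc : IsCompact L)
    (hL : IsPreconnected L) {δ : ℝ} (hδ : 0 < δ) (hLU : ∀ x ∈ L, ball x δ ⊆ U) :
    ∃ ρ < 1, ∀ u ∈ L, ∀ v ∈ L, CaratheodoryLE U u v ρ := by
  suffices ∃ ρ < 1, ∀ p ∈ L ×ˢ L, CaratheodoryLE U p.1 p.2 ρ from
    this.imp fun ρ ⟨hρ, h⟩ => ⟨hρ, fun u hu v hv => h (u, v) ⟨hu, hv⟩⟩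
  refine (hLc.prod hLc).induction_on ⟨0, one_pos, by simp⟩
    (fun S T hST ⟨ρ, hρ, h⟩ => ⟨ρ, hρ, fun p hp => h p (hST hp)⟩)
    (fun S T ⟨ρ, hρ, hS⟩ ⟨σ, hσ, hT⟩ => ⟨max ρ σ, max_lt hρ hσ, fun p hp => hp.elim
      (fun h => (hS p h).mono (le_max_left ρ σ)) (fun h => (hT p h).mono (le_max_right ρ σ))⟩)
    fun ⟨u, v⟩ ⟨hu, hv⟩ => ?_
  obtain ⟨r, hr, huv⟩ := hL.exists_caratheodoryLE_lt_one hδ hLU hu hv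
  have hmem : ∀ x ∈ L, ∀ y ∈ ball x (δ / 2), y ∈ U := fun x hx y hy =>
    hLU x hx (ball_subset_ball (half_le_self hδ.le) hy)
  have hhalf : (1 / 2 : ℝ) < 1 := by norm_num
  have hu₀ := hmem u hu u (mem_ball_self (half_pos hδ))
  have hv₀ := hmem v hv v (mem_ball_self (half_pos hδ))
  have hr₁ := add_div_one_add_mul_lt_one (by norm_num) hhalf huv.nonneg hr
  refine ⟨ball u (δ / 2) ×ˢ ball v (δ / 2), nhdsWithin_le_nhds <|
      prod_mem_nhds (ball_mem_nhds u (half_pos hδ)) (ball_mem_nhds v (half_pos hδ)),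
    _, add_div_one_add_mul_lt_one (by have := huv.nonneg; positivity) hr₁ (by norm_num) hhalf,
    fun ⟨u', v'⟩ ⟨hu', hv'⟩ => ?_⟩
  have hu'u := (caratheodoryLE_half_of_mem_ball (hLU u hu) hu').symm hu₀
  have hvv' := caratheodoryLE_half_of_mem_ball (hLU v hv) hv'
  exact (hu'u.trans huv hu₀ hv₀ hhalf.le hr.le).trans hvv' hv₀ (hmem v hv v' hv') hr₁.le hhalf.le

lemma caratheodoryLE_iterate {U L : Set ℂ} {φ : ℂ → ℂ} (hφ : DifferentiableOn ℂ φ U)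
    (hφUL : MapsTo φ U L) (hLU : L ⊆ U) {ρ c : ℝ} (hρ : ∀ u ∈ L, ∀ v ∈ L, CaratheodoryLE U u v ρ)
    (hρc : ρ < c) {z w : ℂ} (hz : z ∈ L) (hw : w ∈ L) (k : ℕ) :
    CaratheodoryLE U (φ^[k] z) (φ^[k] w) (c ^ k) := by
  induction k with
  | zero => exact fun f _ hfU _ => by simpa using (mem_ball_zero_iff.1 (hfU (hLU hw))).le
  | succ k ih =>
    intro f hf hfU hfz
    have hc : 0 < c := (hρ z hz z hz).nonneg.trans_lt hρc
    have hzk : φ^[k + 1] z ∈ L := (hφUL.mono_left hLU).iterate (k + 1) hz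
    have hg : MapsTo (fun x => f (φ x) / c) U (ball 0 1) := fun x hx => by
      rw [mem_ball_zero_iff, norm_div, norm_real, Real.norm_of_nonneg hc.le, div_lt_one hc]
      exact (hρ _ hzk _ (hφUL hx) f hf hfU hfz).trans_lt hρc
    have := ih _ ((hf.comp hφ (hφUL.mono_right hLU)).div_const _) hg
      (by rw [comp_apply, ← iterate_succ_apply' φ k z, hfz, zero_div])
    rwa [norm_div, norm_real, Real.norm_of_nonneg hc.le, div_le_iff₀ hc, ← pow_succ, comp_apply,
      ← iterate_succ_apply' φ k w] at this

lemma exists_pos_le_mul_pow_of_succ_le {a : ℕ → ℝ} {B c : ℝ} (hc : 0 < c)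
    (h : ∀ k, a (k + 1) ≤ B * c ^ k) : ∃ C > 0, ∀ k, a k ≤ C * c ^ k := by
  refine ⟨max (max (a 0) (B / c)) 1, by positivity, fun k => ?_⟩
  cases k with
  | zero => simp
  | succ k =>
    calc a (k + 1) ≤ B * c ^ k := h k
      _ = B / c * c ^ (k + 1) := by field_simp; ring
      _ ≤ _ := by gcongr; exact (le_max_right _ _).trans (le_max_left _ _)

theorem stmt16_general (D : Set ℂ) (hD : IsOpen D) (hDsc : SimplyConnectedSpace D)
    (φ : ℂ → ℂ) (hφ : DifferentiableOn ℂ φ D)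
    (hcl : closure (φ '' D) ⊆ D) (hclc : IsCompact (closure (φ '' D)))
    (K : Set ℂ) (hKD : K ⊆ D) :
    ∃ C > (0 : ℝ), ∃ l ∈ Set.Ioo (0 : ℝ) 1,
      (∀ k : ℕ, Metric.diam (φ^[k] '' K) ≤ C * l ^ k) ∧
      Filter.Tendsto (fun k : ℕ => Metric.diam (φ^[k] '' K)) Filter.atTop (nhds 0) ∧
      Summable (fun k : ℕ => Metric.diam (φ^[k] '' K)) := by
  set L := closure (φ '' D)
  have hL : IsPreconnected L := ((isConnected_iff_connectedSpace.2 inferInstance).image φ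
    hφ.continuousOn).isPreconnected.closure
  obtain ⟨δ, hδ, hUD⟩ := hclc.exists_thickening_subset_open hD hcl
  set U := thickening δ L
  have hLU : L ⊆ U := self_subset_thickening hδ L
  have hφUL : MapsTo φ U L := fun x hx => subset_closure (mem_image_of_mem φ (hUD hx))
  have hφKL : MapsTo φ K L := fun x hx => subset_closure (mem_image_of_mem φ (hKD hx))
  obtain ⟨R, hR0, hR⟩ := (hclc.isBounded.thickening (δ := δ)).subset_ball_lt 0 (0 : ℂ)
  obtain ⟨ρ, hρ1, hρ⟩ :=
    hclc.exists_caratheodoryLE_lt_one hL hδ fun x hx => ball_subset_thickening hx δ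
  obtain ⟨c, hρc, hc1⟩ := exists_between (max_lt hρ1 one_pos)
  have hc : 0 < c := (le_max_right ρ 0).trans_lt hρc
  have hdiam : ∀ k, diam (φ^[k + 1] '' K) ≤ 2 * R * c ^ k := fun k => by
    refine diam_le_of_forall_dist_le (by positivity) ?_
    rintro _ ⟨x, hx, rfl⟩ _ ⟨y, hy, rfl⟩
    rw [iterate_succ_apply, iterate_succ_apply, dist_comm]
    exact (caratheodoryLE_iterate (hφ.mono hUD) hφUL hLU hρ ((le_max_left ρ 0).trans_lt hρc)
      (hφKL hx) (hφKL hy) k).dist_le hR (hLU ((hφUL.mono_left hLU).iterate k (hφKL hx)))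
  obtain ⟨C, hC, hCk⟩ :=
    exists_pos_le_mul_pow_of_succ_le (a := fun k => diam (φ^[k] '' K)) hc hdiam
  have hgeom := (summable_geometric_of_lt_one hc.le hc1).mul_left C
  refine ⟨C, hC, c, ⟨hc, hc1⟩, hCk, ?_, .of_nonneg_of_le (fun _ => diam_nonneg) hCk hgeom⟩
  exact squeeze_zero (fun _ => diam_nonneg) hCk (by simpa using
    (tendsto_pow_atTop_nhds_zero_of_lt_one hc.le hc1).const_mul C)

/-- Geometric contraction of diameters: for a holomorphic self-map `φ` of a
simply connected hyperbolic domain `D ⊊ ℂ` whose image is compactly contained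
in `D`, the diameters of the iterated images of a compact set `K ⊆ D` decay
geometrically; in particular they tend to `0` and their sum converges. -/
theorem stmt16 (D : Set ℂ) (hD : IsOpen D) (hDne : D ≠ Set.univ)
    (hDsc : SimplyConnectedSpace D)
    (φ : ℂ → ℂ) (hφ : DifferentiableOn ℂ φ D)
    (hmaps : Set.MapsTo φ D D)
    (hcl : closure (φ '' D) ⊆ D) (hclc : IsCompact (closure (φ '' D)))
    (K : Set ℂ) (hK : IsCompact K) (hKD : K ⊆ D) :
    ∃ C > (0 : ℝ), ∃ l ∈ Set.Ioo (0 : ℝ) 1,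
      (∀ k : ℕ, Metric.diam (φ^[k] '' K) ≤ C * l ^ k) ∧
      Filter.Tendsto (fun k : ℕ => Metric.diam (φ^[k] '' K)) Filter.atTop (nhds 0) ∧
      Summable (fun k : ℕ => Metric.diam (φ^[k] '' K)) :=
  stmt16_general D hD hDsc φ hφ hcl hclc K hKD
end
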